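/- arXiv:2510.10440 — 3 statements merged into one kernel-verified Lean document; each statement's English description precedes it below -/
import Mathlib

section
/- For matrices A, W ∈ ℝ^{u×i} and B, C ∈ ℝ^{i×d}, vec((Wᵀ ⊙ (C Bᵀ Aᵀ)) A B) = (AB ⊗ I_i)ᵀ · diag(vec(Wᵀ)) · (AB ⊗ I_i) · vec(C), where I_i is the i×i identity matrix. -/
open Matrix
open scoped Kronecker Matrix

/-- Column-stacking vectorization: `vec M (j, i) = M i j`. -/
def vec {m n : Type*} (M : Matrix m n ℝ) : n × m → ℝ := fun p => M p.2 p.1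

/-
With `M = A B`, the identities `vec (X M) = (M ⊗ I)ᵀ vec X`, `vec (W ⊙ Y) = diag (vec W) vec Y`
and `vec (C Mᵀ) = (M ⊗ I) vec C` turn the left-hand side into the right-hand side one factor
at a time.
-/

namespace Matrix

theorem vec_hadamard_mul_transpose_mul_eq_kronecker {R m n p : Type*} [CommSemiring R]
    [Fintype m] [Fintype n] [Fintype p] [DecidableEq m] [DecidableEq n]
    (W : Matrix m n R) (C : Matrix m p R) (M : Matrix n p R) :
    vec ((W ⊙ (C * Mᵀ)) * M) =
      ((M ⊗ₖ (1 : Matrix m m R))ᵀ * diagonal (vec W) * (M ⊗ₖ (1 : Matrix m m R))) *ᵥ vec C := by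
  have h_diagonal : diagonal (vec W) *ᵥ vec (C * Mᵀ) = vec (W ⊙ (C * Mᵀ)) :=
    funext fun x => mulVec_diagonal _ _ x
  rw [← mulVec_mulVec, ← mulVec_mulVec, kronecker_mulVec_vec, Matrix.one_mul, h_diagonal,
    mulVec_transpose, vec_mul_eq_vecMul]

end Matrix

theorem stmt_1_general {u i d : Type*} [Fintype u] [Fintype i] [Fintype d]
    [DecidableEq u] [DecidableEq i]
    (A W : Matrix u i ℝ) (B C : Matrix i d ℝ) :
    _root_.vec ((Wᵀ ⊙ (C * Bᵀ * Aᵀ)) * (A * B)) =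
      (((A * B) ⊗ₖ (1 : Matrix i i ℝ))ᵀ * diagonal (_root_.vec Wᵀ) *
        ((A * B) ⊗ₖ (1 : Matrix i i ℝ))).mulVec (_root_.vec C) := by
  rw [Matrix.mul_assoc C, ← transpose_mul]
  -- `_root_.vec` is definitionally Mathlib's `Matrix.vec`
  exact vec_hadamard_mul_transpose_mul_eq_kronecker Wᵀ C (A * B)

theorem stmt_1 {u i d : Type*} [Fintype u] [Fintype i] [Fintype d]
    [DecidableEq u] [DecidableEq i] [DecidableEq d]
    (A W : Matrix u i ℝ) (B C : Matrix i d ℝ) :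
    _root_.vec ((Wᵀ ⊙ (C * Bᵀ * Aᵀ)) * (A * B)) =
      (((A * B) ⊗ₖ (1 : Matrix i i ℝ))ᵀ * diagonal (_root_.vec Wᵀ) *
        ((A * B) ⊗ₖ (1 : Matrix i i ℝ))).mulVec (_root_.vec C) :=
  stmt_1_general A W B C
end

section
/- Let A ∈ ℝ^{n×n} be symmetric positive definite with condition number κ(A) = λ_max(A)/λ_min(A), b ∈ ℝ^n, and x = A⁻¹b. The iterates x_k of the conjugate gradient method started at x₀ satisfy ‖x_k − x‖_A ≤ 2((√κ − 1)/(√κ + 1))^k ‖x₀ − x‖_A, where ‖v‖_A = √(vᵀAv). -/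
/-!
The error `e k = x k - xstar` of conjugate gradients is `A`-orthogonal to the span of the first `k`
search directions, and as long as no residual has vanished this span contains `P(A) e₀ - e₀` for
every polynomial `P` of degree `≤ k` with `P(0) = 1`. Hence `‖e k‖_A ≤ ‖P(A) e₀‖_A`, which in an
eigenbasis of `A` is at most `max |P(λᵢ)| · ‖e₀‖_A`. On `[a, b] = [λ_min, λ_max]` the rescaled
Chebyshev polynomial `T_k((b + a - 2t)/(b - a)) / T_k((b + a)/(b - a))` has modulus at most
`2 ((√κ - 1)/(√κ + 1))^k`, since `T_k((z + z⁻¹)/2) = (z^k + z^{-k})/2 ≥ z^k / 2` for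
`z = (√κ + 1)/(√κ - 1)`.
-/

open Matrix Polynomial

section Chebyshev

open Polynomial.Chebyshev Real

lemma half_pow_le_eval_T_real {z : ℝ} (hz : 0 < z) (k : ℕ) :
    z ^ k / 2 ≤ (T ℝ k).eval ((z + z⁻¹) / 2) := by
  have hexp : exp (k * log z) = z ^ k := by
    rw [← log_pow, exp_log (pow_pos hz k)]
  rw [← cosh_log hz, T_real_cosh, cosh_eq, Int.cast_natCast, hexp]
  linarith [exp_pos (-(k * log z))]

theorem exists_poly_eval_zero_eq_one_abs_le {a b : ℝ} (ha : 0 < a) (hab : a ≤ b) (k : ℕ) :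
    ∃ P : ℝ[X], P.natDegree ≤ k ∧ P.eval 0 = 1 ∧
      ∀ t ∈ Set.Icc a b, |P.eval t| ≤ 2 * ((√(b / a) - 1) / (√(b / a) + 1)) ^ k := by
  rcases hab.eq_or_lt with rfl | hab
  · refine ⟨(C (-a⁻¹) * X + C 1) ^ k, ?_, by simp, fun t ht => ?_⟩
    · exact (natDegree_pow_le_of_le k natDegree_linear_le).trans (mul_one k).le
    · obtain rfl : t = a := le_antisymm ht.2 ht.1
      rw [div_self ha.ne', sqrt_one]
      rcases k.eq_zero_or_pos with rfl | hk
      · norm_num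
      · simp [ha.ne', zero_pow hk.ne']
  set s := √(b / a)
  have hs : 1 < s := by
    rw [show (1 : ℝ) = √1 from sqrt_one.symm]
    exact sqrt_lt_sqrt zero_le_one ((one_lt_div ha).2 hab)
  have hs2 : s ^ 2 = b / a := sq_sqrt (div_nonneg (ha.le.trans hab.le) ha.le)
  set z := (s + 1) / (s - 1)
  have hz : 0 < z := div_pos (by linarith) (by linarith)
  set σ := (b + a) / (b - a)
  have hσ : σ = (z + z⁻¹) / 2 := by
    have hb : b = s ^ 2 * a := by rw [hs2]; field_simp
    have hs1 : s - 1 ≠ 0 := by linarith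
    have hs1' : s + 1 ≠ 0 := by linarith
    have hs21 : s ^ 2 - 1 ≠ 0 := by nlinarith
    rw [show σ = (s ^ 2 + 1) / (s ^ 2 - 1) by
      simp only [σ, hb, ← add_one_mul, ← sub_one_mul, mul_div_mul_right _ _ ha.ne']]
    simp only [z, inv_div]
    field_simp
    ring
  set c := (T ℝ k).eval σ
  have hc : z ^ k / 2 ≤ c := by
    simp only [c]; rw [hσ]; exact half_pow_le_eval_T_real hz k
  have hc0 : 0 < c := lt_of_lt_of_le (by positivity) hc
  refine ⟨C c⁻¹ * (T ℝ k).comp (C (-(2 / (b - a))) * X + C σ), ?_, ?_, fun t ht => ?_⟩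
  · refine (natDegree_C_mul_le _ _).trans ?_
    rw [natDegree_comp, natDegree_T, Int.natAbs_natCast]
    exact (Nat.mul_le_mul_left k natDegree_linear_le).trans (mul_one k).le
  · simp [c, hc0.ne']
  · have hmem : |-(2 / (b - a)) * t + σ| ≤ 1 := by
      rw [abs_le]
      constructor
      · simp only [σ]; rw [← sub_nonneg]; field_simp; linarith [ht.2]
      · simp only [σ]; rw [← sub_nonneg]; field_simp; linarith [ht.1]
    have hT := abs_eval_T_real_le_one (k : ℤ) hmem
    simp only [eval_mul, eval_C, eval_comp, eval_add, eval_X, abs_mul, abs_inv, abs_of_pos hc0]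
    calc c⁻¹ * |(T ℝ k).eval (-(2 / (b - a)) * t + σ)| ≤ c⁻¹ := by
          simpa using mul_le_mul_of_nonneg_left hT (inv_nonneg.2 hc0.le)
      _ ≤ (z ^ k / 2)⁻¹ := inv_anti₀ (by positivity) hc
      _ = 2 * z⁻¹ ^ k := by rw [inv_div, div_eq_mul_inv, inv_pow]
      _ = 2 * ((s - 1) / (s + 1)) ^ k := by simp only [z, inv_div]

end Chebyshev

section

variable {n : Type*} [Fintype n]

lemma OrthonormalBasis.dotProduct_eq_sum {ι : Type*} [Fintype ι]
    (u : OrthonormalBasis ι ℝ (EuclideanSpace ℝ n)) (v w : n → ℝ) :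
    v ⬝ᵥ w = ∑ i, (⇑(u i) ⬝ᵥ v) * (⇑(u i) ⬝ᵥ w) := by
  have := u.sum_inner_mul_inner (WithLp.toLp 2 v) (WithLp.toLp 2 w)
  simp only [EuclideanSpace.inner_eq_star_dotProduct, star_trivial] at this
  rw [dotProduct_comm v w, ← this]
  simp only [dotProduct_comm]

namespace Matrix

lemma IsHermitian.dotProduct_mulVec_comm {R : Type*} [CommSemiring R] [StarRing R] [TrivialStar R]
    {A : Matrix n n R} (hA : A.IsHermitian) (v w : n → R) :
    v ⬝ᵥ A *ᵥ w = A *ᵥ v ⬝ᵥ w := by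
  rw [dotProduct_mulVec, ← mulVec_transpose, (isHermitian_iff_isSymm.mp hA).eq]

lemma PosSemidef.dotProduct_mulVec_le_add {A : Matrix n n ℝ} (hA : A.PosSemidef)
    {e w : n → ℝ} (h : w ⬝ᵥ A *ᵥ e = 0) :
    e ⬝ᵥ A *ᵥ e ≤ (e + w) ⬝ᵥ A *ᵥ (e + w) := by
  have hw : 0 ≤ w ⬝ᵥ A *ᵥ w := by simpa using hA.dotProduct_mulVec_nonneg w
  have hsymm : e ⬝ᵥ A *ᵥ w = w ⬝ᵥ A *ᵥ e := by
    rw [hA.1.dotProduct_mulVec_comm, dotProduct_comm]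
  simp only [mulVec_add, add_dotProduct, dotProduct_add, hsymm, h]
  linarith

variable [DecidableEq n] {A : Matrix n n ℝ} (hA : A.IsHermitian)

lemma IsHermitian.eigenvectorBasis_dotProduct_mulVec (i : n) (v : n → ℝ) :
    ⇑(hA.eigenvectorBasis i) ⬝ᵥ A *ᵥ v = hA.eigenvalues i * (⇑(hA.eigenvectorBasis i) ⬝ᵥ v) := by
  rw [hA.dotProduct_mulVec_comm, hA.mulVec_eigenvectorBasis, smul_dotProduct, smul_eq_mul]

lemma IsHermitian.eigenvectorBasis_dotProduct_aeval_mulVec (P : ℝ[X]) (i : n) (v : n → ℝ) :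
    ⇑(hA.eigenvectorBasis i) ⬝ᵥ aeval A P *ᵥ v =
      P.eval (hA.eigenvalues i) * (⇑(hA.eigenvectorBasis i) ⬝ᵥ v) := by
  induction P using Polynomial.induction_on generalizing v with
  | C c => simp [Algebra.algebraMap_eq_smul_one, smul_mulVec, dotProduct_smul]
  | add P Q hP hQ => simp only [map_add, add_mulVec, dotProduct_add, hP, hQ, eval_add]; ring
  | monomial m c ih =>
    rw [pow_succ, ← mul_assoc, map_mul, aeval_X, ← mulVec_mulVec, ih,
      hA.eigenvectorBasis_dotProduct_mulVec]
    simp only [eval_mul, eval_pow, eval_X]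
    ring

lemma IsHermitian.dotProduct_mulVec_eq_sum (v : n → ℝ) :
    v ⬝ᵥ A *ᵥ v = ∑ i, hA.eigenvalues i * (⇑(hA.eigenvectorBasis i) ⬝ᵥ v) ^ 2 := by
  rw [hA.eigenvectorBasis.dotProduct_eq_sum]
  simp only [hA.eigenvectorBasis_dotProduct_mulVec]
  exact Finset.sum_congr rfl fun i _ => by ring

theorem PosSemidef.aeval_dotProduct_mulVec_le (hA : A.PosSemidef) {P : ℝ[X]} {M : ℝ}
    (hP : ∀ i, |P.eval (hA.1.eigenvalues i)| ≤ M) (v : n → ℝ) :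
    aeval A P *ᵥ v ⬝ᵥ A *ᵥ (aeval A P *ᵥ v) ≤ M ^ 2 * (v ⬝ᵥ A *ᵥ v) := by
  simp only [hA.1.dotProduct_mulVec_eq_sum, hA.1.eigenvectorBasis_dotProduct_aeval_mulVec,
    Finset.mul_sum]
  refine Finset.sum_le_sum fun i _ => ?_
  have hPM : P.eval (hA.1.eigenvalues i) ^ 2 ≤ M ^ 2 := 
    sq_le_sq.2 ((hP i).trans (le_abs_self M))
  have hμ := hA.eigenvalues_nonneg i
  linear_combination
    (hA.1.eigenvalues i * (⇑(hA.1.eigenvectorBasis i) ⬝ᵥ v) ^ 2) * hPM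

end Matrix

lemma dotProduct_eq_zero_of_mem_span {R : Type*} [CommSemiring R] {w : n → R} {s : Set (n → R)}
    (h : ∀ v ∈ s, w ⬝ᵥ v = 0) {v : n → R} (hv : v ∈ Submodule.span R s) : w ⬝ᵥ v = 0 :=
  Submodule.span_le (p := LinearMap.ker (dotProductBilin R R w)).2 h hv

section searchSpan

variable (R : Type*) {M : Type*} [Semiring R] [AddCommMonoid M] [Module R M] (p : ℕ → M)

def searchSpan (k : ℕ) : Submodule R M :=
  Submodule.span R (p '' Set.Iio k)

variable {R p}

lemma searchSpan_mono {k l : ℕ} (h : k ≤ l) : searchSpan R p k ≤ searchSpan R p l :=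
  Submodule.span_mono (Set.image_mono (Set.Iio_subset_Iio h))

lemma mem_searchSpan {i k : ℕ} (h : i < k) : p i ∈ searchSpan R p k :=
  Submodule.subset_span ⟨i, h, rfl⟩

end searchSpan

structure IsConjGradient (A : Matrix n n ℝ) (b : n → ℝ) (x r p : ℕ → n → ℝ) (α β : ℕ → ℝ) :
    Prop where
  residual : ∀ k, r k = b - A *ᵥ x k
  p_zero : p 0 = r 0
  alpha : ∀ k, α k = (r k ⬝ᵥ r k) / (p k ⬝ᵥ A *ᵥ p k)
  x_succ : ∀ k, x (k + 1) = x k + α k • p k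
  beta : ∀ k, β k = (r (k + 1) ⬝ᵥ r (k + 1)) / (r k ⬝ᵥ r k)
  p_succ : ∀ k, p (k + 1) = r (k + 1) + β k • p k

namespace IsConjGradient

variable {A : Matrix n n ℝ} {b : n → ℝ} {x r p : ℕ → n → ℝ} {α β : ℕ → ℝ}
  (h : IsConjGradient A b x r p α β)
include h

lemma r_succ (k : ℕ) : r (k + 1) = r k - α k • A *ᵥ p k := by
  rw [h.residual, h.x_succ, h.residual, mulVec_add, mulVec_smul]
  abel

lemma mulVec_error {xstar : n → ℝ} (hxstar : A *ᵥ xstar = b) (k : ℕ) :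
    A *ᵥ (x k - xstar) = -r k := by
  rw [h.residual, mulVec_sub, hxstar, neg_sub]

lemma r_mem_searchSpan (k : ℕ) : r k ∈ searchSpan ℝ p (k + 1) := by
  cases k with
  | zero => exact h.p_zero ▸ mem_searchSpan zero_lt_one
  | succ k =>
    rw [show r (k + 1) = p (k + 1) - β k • p k by rw [h.p_succ]; abel]
    exact sub_mem (mem_searchSpan (by omega)) (Submodule.smul_mem _ _ (mem_searchSpan (by omega)))

lemma x_sub_x_zero_mem_searchSpan (k : ℕ) : x k - x 0 ∈ searchSpan ℝ p k := by
  induction k with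
  | zero => simp
  | succ k ih =>
    rw [h.x_succ, add_sub_right_comm]
    exact add_mem (searchSpan_mono k.le_succ ih)
      (Submodule.smul_mem _ _ (mem_searchSpan k.lt_succ_self))

lemma r_eq_zero_of_le {j k : ℕ} (hj : r j = 0) (hjk : j ≤ k) : r k = 0 := by
  induction k, hjk using Nat.le_induction with
  | base => exact hj
  | succ k _ ih =>
    have hp : p k = 0 := by
      cases k with
      | zero => rw [h.p_zero, ih]
      | succ k => rw [h.p_succ, ih, h.beta, ih]; simp
    rw [h.r_succ, ih, hp]
    simp

lemma r_dotProduct_p_self {k : ℕ} (hk : ∀ i < k, r k ⬝ᵥ p i = 0) : r k ⬝ᵥ p k = r k ⬝ᵥ r k := by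
  cases k with
  | zero => rw [h.p_zero]
  | succ k =>
    rw [h.p_succ, dotProduct_add, dotProduct_smul, hk k k.lt_succ_self, smul_zero, add_zero]

lemma alpha_mul_dotProduct_mulVec_self {k : ℕ} (hA : A.PosDef) (hk : r k ≠ 0)
    (hrp : ∀ i < k, r k ⬝ᵥ p i = 0) :
    α k * (p k ⬝ᵥ A *ᵥ p k) = r k ⬝ᵥ r k := by
  have hpk : p k ≠ 0 := by
    intro hpk
    have := h.r_dotProduct_p_self hrp
    rw [hpk, dotProduct_zero, eq_comm, dotProduct_self_eq_zero] at this
    exact hk this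
  have hpAp : 0 < p k ⬝ᵥ A *ᵥ p k := by simpa using hA.dotProduct_mulVec_pos hpk
  rw [h.alpha, div_mul_cancel₀ _ hpAp.ne']

lemma alpha_ne_zero {k : ℕ} (hA : A.PosDef) (hk : r k ≠ 0) (hrp : ∀ i < k, r k ⬝ᵥ p i = 0) :
    α k ≠ 0 := by
  intro hα
  have := h.alpha_mul_dotProduct_mulVec_self hA hk hrp
  rw [hα, zero_mul, eq_comm, dotProduct_self_eq_zero] at this
  exact hk this

lemma mulVec_p_eq {k : ℕ} (hα : α k ≠ 0) : A *ᵥ p k = (α k)⁻¹ • (r k - r (k + 1)) := by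
  rw [h.r_succ, sub_sub_cancel, smul_smul, inv_mul_cancel₀ hα, one_smul]

lemma orthogonal_succ (hA : A.PosDef) {k : ℕ} (hr : ∀ j ≤ k, r j ≠ 0)
    (ih : ∀ j ≤ k, ∀ i < j, r j ⬝ᵥ p i = 0 ∧ p j ⬝ᵥ A *ᵥ p i = 0) :
    ∀ i < k + 1, r (k + 1) ⬝ᵥ p i = 0 ∧ p (k + 1) ⬝ᵥ A *ᵥ p i = 0 := by
  have hrp j (hj : j ≤ k) : ∀ i < j, r j ⬝ᵥ p i = 0 := fun i hi => (ih j hj i hi).1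
  have hAp i (hi : i ≤ k) : A *ᵥ p i = (α i)⁻¹ • (r i - r (i + 1)) :=
    h.mulVec_p_eq (h.alpha_ne_zero hA (hr i hi) (hrp i hi))
  have hα := h.alpha_mul_dotProduct_mulVec_self hA (hr k le_rfl) (hrp k le_rfl)
  have hr_p : ∀ i < k + 1, r (k + 1) ⬝ᵥ p i = 0 := by
    intro i hi
    rw [h.r_succ, sub_dotProduct, smul_dotProduct, ← hA.1.dotProduct_mulVec_comm]
    rcases (Nat.lt_succ_iff.1 hi).lt_or_eq with hi | rfl
    · rw [(ih k le_rfl i hi).1, (ih k le_rfl i hi).2, smul_zero, sub_zero]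
    · rw [h.r_dotProduct_p_self (hrp i le_rfl), smul_eq_mul, hα, sub_self]
  have hr_r i (hi : i ≤ k) : r (k + 1) ⬝ᵥ r i = 0 :=
    dotProduct_eq_zero_of_mem_span (by rintro _ ⟨j, hj, rfl⟩; exact hr_p j hj)
      (searchSpan_mono (by omega) (h.r_mem_searchSpan i))
  have hr_Ap i (hi : i ≤ k) : r (k + 1) ⬝ᵥ A *ᵥ p i = -((α i)⁻¹ * (r (k + 1) ⬝ᵥ r (i + 1))) := by
    rw [hAp i hi, dotProduct_smul, dotProduct_sub, hr_r i (by omega), zero_sub, smul_eq_mul,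
      mul_neg]
  refine fun i hi => ⟨hr_p i hi, ?_⟩
  rw [h.p_succ, add_dotProduct, smul_dotProduct, hr_Ap i (by omega), smul_eq_mul]
  rcases (Nat.lt_succ_iff.1 hi).lt_or_eq with hi | rfl
  · rw [hr_r (i + 1) (by omega), (ih k le_rfl i hi).2]
    simp
  · have hrr : r i ⬝ᵥ r i ≠ 0 := fun h0 => hr i le_rfl (dotProduct_self_eq_zero.1 h0)
    have hpAp : p i ⬝ᵥ A *ᵥ p i ≠ 0 := fun h0 => hrr (by rw [← hα, h0, mul_zero])
    -- `β i` is exactly the coefficient that cancels the `p i` component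
    rw [h.beta, ← hα]
    field_simp
    ring

theorem orthogonal (hA : A.PosDef) {K : ℕ} (hr : ∀ j < K, r j ≠ 0) :
    ∀ j ≤ K, ∀ i < j, r j ⬝ᵥ p i = 0 ∧ p j ⬝ᵥ A *ᵥ p i = 0 := by
  induction K with
  | zero => intro j hj i hi; omega
  | succ K ih =>
    have ih := ih fun j hj => hr j (by omega)
    intro j hj
    rcases (Nat.le_succ_iff.1 hj) with hj | rfl
    · exact ih j hj
    · exact h.orthogonal_succ hA (fun j hj => hr j (by omega)) ih

lemma alpha_ne_zero_of_lt (hA : A.PosDef) {K : ℕ} (hr : ∀ j < K, r j ≠ 0) {i : ℕ} (hi : i < K) :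
    α i ≠ 0 :=
  h.alpha_ne_zero hA (hr i hi) fun l hl => (h.orthogonal hA hr i hi.le l hl).1

lemma mulVec_mem_searchSpan {k : ℕ} (hα : ∀ i < k, α i ≠ 0) {v : n → ℝ}
    (hv : v ∈ searchSpan ℝ p k) : A *ᵥ v ∈ searchSpan ℝ p (k + 1) := by
  suffices searchSpan ℝ p k ≤ (searchSpan ℝ p (k + 1)).comap A.mulVecLin from this hv
  refine Submodule.span_le.2 ?_
  rintro _ ⟨i, hi, rfl⟩
  have hi : i < k := hi
  change A *ᵥ p i ∈ searchSpan ℝ p (k + 1)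
  rw [h.mulVec_p_eq (hα i hi)]
  exact Submodule.smul_mem _ _ (sub_mem (searchSpan_mono (by omega) (h.r_mem_searchSpan i))
    (searchSpan_mono (by omega) (h.r_mem_searchSpan (i + 1))))

variable [DecidableEq n]

lemma pow_mulVec_r_zero_mem {k : ℕ} (hα : ∀ i < k, α i ≠ 0) :
    ∀ m < k, A ^ m *ᵥ r 0 ∈ searchSpan ℝ p (m + 1) := by
  intro m hm
  induction m with
  | zero => simpa using h.r_mem_searchSpan 0
  | succ m ih =>
    rw [pow_succ', ← mulVec_mulVec]
    exact h.mulVec_mem_searchSpan (fun i hi => hα i (by omega)) (ih (by omega))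

lemma aeval_mulVec_sub_mem {xstar : n → ℝ} (hxstar : A *ᵥ xstar = b) {k : ℕ}
    (hα : ∀ i < k, α i ≠ 0) {P : ℝ[X]} (hP : P.natDegree ≤ k) (hP0 : P.eval 0 = 1) :
    aeval A P *ᵥ (x 0 - xstar) - (x 0 - xstar) ∈ searchSpan ℝ p k := by
  rw [aeval_eq_sum_range' (Nat.lt_succ_of_le hP), Finset.sum_range_succ', coeff_zero_eq_eval_zero,
    hP0, pow_zero, one_smul, add_mulVec, one_mulVec, add_sub_cancel_right, sum_mulVec]
  refine Submodule.sum_mem _ fun i hi => ?_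
  rw [smul_mulVec, pow_succ, ← mulVec_mulVec, h.mulVec_error hxstar, mulVec_neg]
  exact Submodule.smul_mem _ _ (neg_mem (searchSpan_mono (Finset.mem_range.1 hi)
    (h.pow_mulVec_r_zero_mem hα i (Finset.mem_range.1 hi))))

theorem error_le_aeval (hA : A.PosDef) {xstar : n → ℝ} (hxstar : A *ᵥ xstar = b) {k : ℕ}
    {P : ℝ[X]} (hP : P.natDegree ≤ k) (hP0 : P.eval 0 = 1) :
    (x k - xstar) ⬝ᵥ A *ᵥ (x k - xstar) ≤
      aeval A P *ᵥ (x 0 - xstar) ⬝ᵥ A *ᵥ (aeval A P *ᵥ (x 0 - xstar)) := by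
  by_cases hr : ∀ j < k, r j ≠ 0
  · set w := aeval A P *ᵥ (x 0 - xstar) - (x k - xstar)
    have hw : w ∈ searchSpan ℝ p k := by
      rw [show w = (aeval A P *ᵥ (x 0 - xstar) - (x 0 - xstar)) - (x k - x 0) by
        simp only [w]; abel]
      exact sub_mem (h.aeval_mulVec_sub_mem hxstar (fun i => h.alpha_ne_zero_of_lt hA hr) hP hP0)
        (h.x_sub_x_zero_mem_searchSpan k)
    have hr_w : r k ⬝ᵥ w = 0 := dotProduct_eq_zero_of_mem_span
      (by rintro _ ⟨i, hi, rfl⟩; exact (h.orthogonal hA hr k le_rfl i hi).1) hw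
    have hwAe : w ⬝ᵥ A *ᵥ (x k - xstar) = 0 := by
      rw [h.mulVec_error hxstar, dotProduct_neg, dotProduct_comm, hr_w, neg_zero]
    simpa [w] using hA.posSemidef.dotProduct_mulVec_le_add hwAe
  · push Not at hr
    obtain ⟨j, hj, hrj⟩ := hr
    rw [h.mulVec_error hxstar, h.r_eq_zero_of_le hrj hj.le, neg_zero, dotProduct_zero]
    simpa using hA.posSemidef.dotProduct_mulVec_nonneg (aeval A P *ᵥ (x 0 - xstar))

end IsConjGradient

end

theorem stmt_15_general {n : Type*} [Fintype n] [DecidableEq n]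
    (A : Matrix n n ℝ) (hA : A.PosDef) (b : n → ℝ)
    (lamMax lamMin kappa : ℝ)
    (hmax : IsGreatest (Set.range hA.1.eigenvalues) lamMax)
    (hmin : IsLeast (Set.range hA.1.eigenvalues) lamMin)
    (hkappa : kappa = lamMax / lamMin)
    (xstar : n → ℝ) (hxstar : A.mulVec xstar = b)
    (x r p : ℕ → n → ℝ) (alpha beta : ℕ → ℝ)
    (hr : ∀ k, r k = b - A.mulVec (x k))
    (hp0 : p 0 = r 0)
    (halpha : ∀ k, alpha k = (r k ⬝ᵥ r k) / (p k ⬝ᵥ A.mulVec (p k)))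
    (hx : ∀ k, x (k + 1) = x k + alpha k • p k)
    (hbeta : ∀ k, beta k = (r (k + 1) ⬝ᵥ r (k + 1)) / (r k ⬝ᵥ r k))
    (hp : ∀ k, p (k + 1) = r (k + 1) + beta k • p k) :
    ∀ k : ℕ,
      Real.sqrt ((x k - xstar) ⬝ᵥ A.mulVec (x k - xstar)) ≤
        2 * ((Real.sqrt kappa - 1) / (Real.sqrt kappa + 1)) ^ k *
          Real.sqrt ((x 0 - xstar) ⬝ᵥ A.mulVec (x 0 - xstar)) := by
  intro k
  have hcg : IsConjGradient A b x r p alpha beta := ⟨hr, hp0, halpha, hx, hbeta, hp⟩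
  obtain ⟨i₀, hi₀⟩ := hmin.1
  have hlamMin : 0 < lamMin := hi₀ ▸ hA.eigenvalues_pos i₀
  have hspec (i : n) : hA.1.eigenvalues i ∈ Set.Icc lamMin lamMax :=
    ⟨hmin.2 ⟨i, rfl⟩, hmax.2 ⟨i, rfl⟩⟩
  obtain ⟨P, hPdeg, hP0, hPbound⟩ :=
    exists_poly_eval_zero_eq_one_abs_le hlamMin (hmin.2 hmax.1) k
  rw [← hkappa] at hPbound
  set M := 2 * ((Real.sqrt kappa - 1) / (Real.sqrt kappa + 1)) ^ k
  have hM : 0 ≤ M := (abs_nonneg _).trans (hPbound _ (hspec i₀))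
  have hquad := (hcg.error_le_aeval hA hxstar hPdeg hP0).trans
    (hA.posSemidef.aeval_dotProduct_mulVec_le (fun i => hPbound _ (hspec i)) (x 0 - xstar))
  calc Real.sqrt ((x k - xstar) ⬝ᵥ A *ᵥ (x k - xstar))
      ≤ Real.sqrt (M ^ 2 * ((x 0 - xstar) ⬝ᵥ A *ᵥ (x 0 - xstar))) := Real.sqrt_le_sqrt hquad
    _ = M * Real.sqrt ((x 0 - xstar) ⬝ᵥ A *ᵥ (x 0 - xstar)) := by
      rw [Real.sqrt_mul (sq_nonneg M), Real.sqrt_sq hM]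

theorem stmt_15 {n : Type*} [Fintype n] [DecidableEq n] [Nonempty n]
    (A : Matrix n n ℝ) (hA : A.PosDef) (b : n → ℝ)
    (lamMax lamMin kappa : ℝ)
    (hmax : IsGreatest (Set.range hA.1.eigenvalues) lamMax)
    (hmin : IsLeast (Set.range hA.1.eigenvalues) lamMin)
    (hkappa : kappa = lamMax / lamMin)
    (xstar : n → ℝ) (hxstar : A.mulVec xstar = b)
    (x r p : ℕ → n → ℝ) (alpha beta : ℕ → ℝ)
    (hr : ∀ k, r k = b - A.mulVec (x k))
    (hp0 : p 0 = r 0)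
    (halpha : ∀ k, alpha k = (r k ⬝ᵥ r k) / (p k ⬝ᵥ A.mulVec (p k)))
    (hx : ∀ k, x (k + 1) = x k + alpha k • p k)
    (hbeta : ∀ k, beta k = (r (k + 1) ⬝ᵥ r (k + 1)) / (r k ⬝ᵥ r k))
    (hp : ∀ k, p (k + 1) = r (k + 1) + beta k • p k) :
    ∀ k : ℕ,
      Real.sqrt ((x k - xstar) ⬝ᵥ A.mulVec (x k - xstar)) ≤
        2 * ((Real.sqrt kappa - 1) / (Real.sqrt kappa + 1)) ^ k *
          Real.sqrt ((x 0 - xstar) ⬝ᵥ A.mulVec (x 0 - xstar)) :=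
  stmt_15_general A hA b lamMax lamMin kappa hmax hmin hkappa xstar hxstar x r p alpha beta hr hp0
    halpha hx hbeta hp
end

section
/- Let X ∈ ℝ^{u×n}, W ∈ ℝ^{u×n} with positive entries, and let M = I_n ⊗ XᵀX + λ I_{n²} and H = (I_n ⊗ X)ᵀ diag(vec(W)) (I_n ⊗ X) + λ I_{n²} with λ > 0. If all entries of W lie in [1, α] for some α ≥ 1, then the eigenvalues of M⁻¹H lie in [1, α]; in particular the condition number of M^{-1/2} H M^{-1/2} is at most α. -/
open Matrix
open scoped Kronecker Matrix

/-!
Write `K = I ⊗ X`, so that `M = KᵀK + λI` and `H = Kᵀ diag(vec W) K + λI`. Since `1 ≤ W ≤ α` entrywise, `M ≤ H ≤ αM`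
in the Loewner order, so for an eigenvector `v` of `M⁻¹H` with eigenvalue `μ` the identity
`vᵀHv = μ vᵀMv` with `vᵀMv > 0` forces `1 ≤ μ ≤ α`. The matrix `R H R` with `R² = M⁻¹` has the same
characteristic polynomial as `R (R H) = M⁻¹H`, so its eigenvalues lie in `[1, α]` as well, and any two
of them have ratio at most `α`.
-/

open scoped MatrixOrder

namespace Matrix

theorem hasEigenvalue_toLin'_mul_comm {N K : Type*} [Fintype N] [DecidableEq N] [Field K]
    (A B : Matrix N N K) (μ : K) :
    Module.End.HasEigenvalue (toLin' (A * B)) μ ↔ Module.End.HasEigenvalue (toLin' (B * A)) μ := by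
  simp only [Module.End.hasEigenvalue_iff_isRoot_charpoly, charpoly_toLin', charpoly_mul_comm]

theorem dotProduct_mulVec_le_of_le {N : Type*} [Fintype N] {A B : Matrix N N ℝ} (h : A ≤ B)
    (v : N → ℝ) : v ⬝ᵥ A *ᵥ v ≤ v ⬝ᵥ B *ᵥ v := by
  have := (le_iff.mp h).dotProduct_mulVec_nonneg v
  rw [star_trivial, sub_mulVec, dotProduct_sub] at this
  linarith

theorem mem_Icc_of_hasEigenvalue_inv_mul {N : Type*} [Fintype N] [DecidableEq N]
    {M H : Matrix N N ℝ} {lo hi μ : ℝ} (hM : M.PosDef) (hlo : lo • M ≤ H) (hhi : H ≤ hi • M)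
    (hμ : Module.End.HasEigenvalue (toLin' (M⁻¹ * H)) μ) : μ ∈ Set.Icc lo hi := by
  obtain ⟨v, hv⟩ := hμ.exists_hasEigenvector
  have hHv : H *ᵥ v = μ • M *ᵥ v := by
    have := congrArg (M *ᵥ ·) (toLin'_apply (M⁻¹ * H) v ▸ hv.apply_eq_smul)
    simpa only [mulVec_mulVec, mulVec_smul, ← Matrix.mul_assoc,
      mul_nonsing_inv M ((isUnit_iff_isUnit_det M).mp hM.isUnit), Matrix.one_mul] using this
  have hpos : 0 < v ⬝ᵥ M *ᵥ v := by simpa using hM.dotProduct_mulVec_pos hv.right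
  have hlo' := dotProduct_mulVec_le_of_le hlo v
  have hhi' := dotProduct_mulVec_le_of_le hhi v
  simp only [smul_mulVec, hHv, dotProduct_smul, smul_eq_mul] at hlo' hhi'
  exact ⟨le_of_mul_le_mul_right hlo' hpos, le_of_mul_le_mul_right hhi' hpos⟩

theorem smul_one_le_smul_one {N : Type*} [DecidableEq N] {a b : ℝ} (h : a ≤ b) :
    a • (1 : Matrix N N ℝ) ≤ b • 1 := by
  rw [le_iff, ← sub_smul]
  exact PosSemidef.one.smul (sub_nonneg.mpr h)

theorem posDef_transpose_mul_add_smul_one {m N : Type*} [Fintype m] [Fintype N] [DecidableEq N]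
    (K : Matrix m N ℝ) {c : ℝ} (hc : 0 < c) :
    (Kᵀ * K + c • 1).PosDef := by
  rw [← conjTranspose_eq_transpose_of_trivial]
  exact PosDef.posSemidef_add (posSemidef_conjTranspose_mul_self K) (PosDef.one.smul hc)

theorem transpose_mul_diagonal_mul_le {m N : Type*} [Fintype m] [Fintype N] [DecidableEq m]
    (K : Matrix m N ℝ) {d e : m → ℝ} (h : ∀ i, d i ≤ e i) :
    Kᵀ * diagonal d * K ≤ Kᵀ * diagonal e * K := by
  rw [le_iff, ← Matrix.sub_mul, ← Matrix.mul_sub, diagonal_sub,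
    ← conjTranspose_eq_transpose_of_trivial]
  exact (posSemidef_diagonal_iff.mpr fun i => sub_nonneg.mpr (h i)).conjTranspose_mul_mul_same K

theorem smul_transpose_mul_add_smul_one {m N : Type*} [Fintype m] [DecidableEq m]
    [DecidableEq N] (K : Matrix m N ℝ) (t c : ℝ) :
    t • (Kᵀ * K + c • 1) = Kᵀ * diagonal (fun _ : m => t) * K + (t * c) • 1 := by
  rw [← smul_one_eq_diagonal, Matrix.mul_smul, Matrix.mul_one, Matrix.smul_mul, smul_add,
    smul_smul]

theorem smul_transpose_mul_add_smul_one_le {m N : Type*} [Fintype m] [Fintype N]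
    [DecidableEq m] [DecidableEq N] {K : Matrix m N ℝ} {d : m → ℝ} {t c : ℝ}
    (ht : t ≤ 1) (hc : 0 ≤ c) (hd : ∀ i, t ≤ d i) :
    t • (Kᵀ * K + c • 1) ≤ Kᵀ * diagonal d * K + c • 1 := by
  rw [smul_transpose_mul_add_smul_one]
  exact add_le_add (transpose_mul_diagonal_mul_le K hd)
    (smul_one_le_smul_one (mul_le_of_le_one_left hc ht))

theorem le_smul_transpose_mul_add_smul_one {m N : Type*} [Fintype m] [Fintype N]
    [DecidableEq m] [DecidableEq N] {K : Matrix m N ℝ} {d : m → ℝ} {t c : ℝ}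
    (ht : 1 ≤ t) (hc : 0 ≤ c) (hd : ∀ i, d i ≤ t) :
    Kᵀ * diagonal d * K + c • 1 ≤ t • (Kᵀ * K + c • 1) := by
  rw [smul_transpose_mul_add_smul_one]
  exact add_le_add (transpose_mul_diagonal_mul_le K hd)
    (smul_one_le_smul_one (le_mul_of_one_le_left hc ht))

theorem one_kronecker_transpose_mul_one_kronecker {m n N : Type*} [Fintype m] [Fintype N]
    [DecidableEq N] (X : Matrix m n ℝ) :
    ((1 : Matrix N N ℝ) ⊗ₖ X)ᵀ * ((1 : Matrix N N ℝ) ⊗ₖ X) = (1 : Matrix N N ℝ) ⊗ₖ (Xᵀ * X) := by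
  rw [← kroneckerMap_transpose, ← mul_kronecker_mul, transpose_one, one_mul]

end Matrix

theorem stmt_17 {u n : Type*} [Fintype u] [Fintype n] [DecidableEq u] [DecidableEq n]
    (X W : Matrix u n ℝ) (lam alpha : ℝ) (hlam : 0 < lam) (halpha : 1 ≤ alpha)
    (hW : ∀ a b, 1 ≤ W a b ∧ W a b ≤ alpha)
    (M H : Matrix (n × n) (n × n) ℝ)
    (hM : M = (1 : Matrix n n ℝ) ⊗ₖ (Xᵀ * X) + lam • (1 : Matrix (n × n) (n × n) ℝ))
    (hH : H = ((1 : Matrix n n ℝ) ⊗ₖ X)ᵀ * diagonal (_root_.vec W) * ((1 : Matrix n n ℝ) ⊗ₖ X) +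
      lam • (1 : Matrix (n × n) (n × n) ℝ)) :
    (∀ μ : ℝ, Module.End.HasEigenvalue (Matrix.toLin' (M⁻¹ * H)) μ → 1 ≤ μ ∧ μ ≤ alpha) ∧
    (∀ R : Matrix (n × n) (n × n) ℝ, R.PosDef → R * R = M⁻¹ →
      ∀ μ ν : ℝ, Module.End.HasEigenvalue (Matrix.toLin' (R * H * R)) μ →
        Module.End.HasEigenvalue (Matrix.toLin' (R * H * R)) ν → μ ≤ alpha * ν) := by
  rw [← one_kronecker_transpose_mul_one_kronecker] at hM
  have hMpd : M.PosDef := hM ▸ posDef_transpose_mul_add_smul_one _ hlam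
  have hMH : (1 : ℝ) • M ≤ H := hM ▸ hH ▸
    smul_transpose_mul_add_smul_one_le le_rfl hlam.le fun p => (hW p.2 p.1).1
  have hHM : H ≤ alpha • M := hM ▸ hH ▸
    le_smul_transpose_mul_add_smul_one halpha hlam.le fun p => (hW p.2 p.1).2
  have hspec : ∀ μ, Module.End.HasEigenvalue (toLin' (M⁻¹ * H)) μ → 1 ≤ μ ∧ μ ≤ alpha :=
    fun μ hμ => mem_Icc_of_hasEigenvalue_inv_mul hMpd hMH hHM hμ
  refine ⟨hspec, fun R _ hRR μ ν hμ hν => ?_⟩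
  have hRHR : ∀ μ, Module.End.HasEigenvalue (toLin' (R * H * R)) μ → 1 ≤ μ ∧ μ ≤ alpha := by
    intro μ hμ
    rw [hasEigenvalue_toLin'_mul_comm, ← Matrix.mul_assoc, hRR] at hμ
    exact hspec μ hμ
  nlinarith [hRHR μ hμ, hRHR ν hν]
end
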